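/- arXiv:2003.05590 — 4 statements merged into one kernel-verified Lean document; each statement's English description precedes it below -/
import Mathlib

section
/- The map Q^{-1} defined by Q^{-1}(q)(u) = ∫₀ᵘ |q(y)| q(y) dy is a two-sided inverse of the square root velocity transform Q, where Q(c)(u) = c'(u)/√|c'(u)| when c'(u) ≠ 0 and Q(c)(u) = 0 otherwise, as a map from absolutely continuous curves c : [0,1] → ℝᵈ with c(0) = 0 to L²([0,1], ℝᵈ). -/
/-!
Both compositions are the identity pointwise: `‖v / √‖v‖‖ = √‖v‖`, so
`‖Q c‖ Q c` gives back the velocity `c'` and integrating it gives back `c`; and `‖q‖ q` has norm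
`‖q‖²`, so dividing it by the square root of its norm gives back `q`.
-/

open MeasureTheory Set

/-- The square root velocity transform applied to the derivative `g` of a curve:
`srv g u = g u / √|g u|` (which is `0` when `g u = 0`). -/
noncomputable def srv {E : Type*} [NormedAddCommGroup E] [NormedSpace ℝ E]
    (g : ℝ → E) (u : ℝ) : E := (Real.sqrt ‖g u‖)⁻¹ • g u

section

variable {E : Type*} [NormedAddCommGroup E] [NormedSpace ℝ E]

lemma norm_srv (g : ℝ → E) (y : ℝ) : ‖srv g y‖ = √‖g y‖ := by
  rw [srv, norm_smul, norm_inv, Real.norm_of_nonneg (Real.sqrt_nonneg _), inv_mul_eq_div,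
    Real.div_sqrt]

lemma norm_smul_srv (g : ℝ → E) (y : ℝ) : ‖srv g y‖ • srv g y = g y := by
  rcases eq_or_ne (g y) 0 with hzero | hne
  · simp [srv, hzero]
  · have hsqrt : √‖g y‖ ≠ 0 := (Real.sqrt_pos.mpr (norm_pos_iff.mpr hne)).ne'
    rw [norm_srv, srv, smul_smul, mul_inv_cancel₀ hsqrt, one_smul]

lemma srv_norm_smul (q : ℝ → E) (u : ℝ) : srv (fun y => ‖q y‖ • q y) u = q u := by
  rcases eq_or_ne (q u) 0 with hzero | hne
  · simp [srv, hzero]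
  · have hnorm : ‖‖q u‖ • q u‖ = ‖q u‖ * ‖q u‖ := by
      rw [norm_smul, norm_norm]
    simp only [srv, hnorm, Real.sqrt_mul_self (norm_nonneg _), smul_smul,
      inv_mul_cancel₀ (norm_ne_zero_iff.mpr hne), one_smul]

end

/-- The map `Q⁻¹(q)(u) = ∫₀ᵘ |q(y)| q(y) dy` is a two-sided inverse of the SRV transform `Q`
from absolutely continuous curves `c : [0,1] → ℝᵈ` with `c 0 = 0` (encoded via an integrable
derivative `g` with `c u = ∫₀ᵘ g`) to `L²([0,1], ℝᵈ)`. -/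
theorem srv_two_sided_inverse (d : ℕ) :
    (∀ c g : ℝ → EuclideanSpace ℝ (Fin d),
      IntegrableOn g (Icc 0 1) →
      c 0 = 0 →
      (∀ u ∈ Icc (0:ℝ) 1, c u = ∫ y in (0:ℝ)..u, g y) →
      ∀ u ∈ Icc (0:ℝ) 1, (∫ y in (0:ℝ)..u, ‖srv g y‖ • srv g y) = c u) ∧
    (∀ q : ℝ → EuclideanSpace ℝ (Fin d),
      MemLp q 2 (volume.restrict (Icc (0:ℝ) 1)) →
      ∀ᵐ u ∂(volume.restrict (Icc (0:ℝ) 1)),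
        srv (fun y => ‖q y‖ • q y) u = q u) := by
  refine ⟨fun c g _ _ hc u hu => ?_, fun q _ => ae_of_all _ (srv_norm_smul q)⟩
  simp only [norm_smul_srv]
  exact (hc u hu).symm
end

section
/- If a Riemannian metric G on the space of smooth immersed curves satisfies the reparametrization invariance G_c(h, k) = G_{c∘γ}(h∘γ, k∘γ) for all γ ∈ Diff₊(D), then for any path of curves c(t, u) decomposed as c(t, u) = c^{hor}(t, γ(t, u)) with c^{hor} horizontal, the length satisfies L_G(c^{hor}) ≤ L_G(c). -/
open Set

/-- An orientation-preserving smooth reparametrization of `[0,1]`. -/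
def IsReparam (γ : ℝ → ℝ) : Prop :=
  ContDiffOn ℝ (⊤ : ℕ∞) γ (Icc 0 1) ∧ γ 0 = 0 ∧ γ 1 = 1 ∧
  StrictMonoOn γ (Icc 0 1) ∧ MapsTo γ (Icc 0 1) (Icc 0 1)

/-!
Reparametrization invariance moves the energy `G_c(∂_t c, ∂_t c)` back to `c^hor(t)`, where
`∂_t c ∘ γ⁻¹ = ∂_t c^hor + b • ∂_u c^hor` splits into a horizontal and a vertical part. These
are `G`-orthogonal, so by Pythagoras the energy of `c` dominates that of `c^hor` at every time;
integrating square roots gives the length inequality.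
-/

theorem apply_self_le_apply_add_self_of_apply_eq_zero {V : Type*} [Add V] (B : V → V → ℝ)
    (hsymm : ∀ h k, B h k = B k h) (hadd : ∀ h₁ h₂ k, B (h₁ + h₂) k = B h₁ k + B h₂ k)
    (hpos : ∀ h, 0 ≤ B h h) {h k : V} (hhk : B h k = 0) :
    B h h ≤ B (h + k) (h + k) := by
  have hexpand : B (h + k) (h + k) = B h h + 2 * B h k + B k k := by
    rw [hadd, hsymm h, hsymm k, hadd, hadd, hsymm k h]
    ring
  rw [hexpand, hhk]
  linarith [hpos k]

theorem comp_add_smul_comp_eq {E : Type*} [AddCommGroup E] [Module ℝ E]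
    (h v : ℝ → E) (γ γt b : ℝ → ℝ) (ct : ℝ → E)
    (hct : ∀ u, ct u = h (γ u) + γt u • v (γ u)) (hb : ∀ u, b (γ u) = γt u) :
    ct = (h + fun u => b u • v u) ∘ γ :=
  funext fun u => by simp only [hct, Function.comp, Pi.add_apply, hb]

/-- `ct` is `∂_t c`, given through the chain rule as
`∂_t c = ∂_t c^hor ∘ γ + ∂_t γ • (∂_u c^hor ∘ γ)`, and `b` is `∂_t γ` transported through `γ`. -/
theorem horizontal_part_shorter_general {E : Type*} [NormedAddCommGroup E] [NormedSpace ℝ E]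
    (G : (ℝ → E) → (ℝ → E) → (ℝ → E) → ℝ)
    (hsymm : ∀ c h k, G c h k = G c k h)
    (hadd : ∀ c h₁ h₂ k, G c (h₁ + h₂) k = G c h₁ k + G c h₂ k)
    (hpos : ∀ c h, 0 ≤ G c h h)
    (hinv : ∀ c h k γ, IsReparam γ → G c h k = G (c ∘ γ) (h ∘ γ) (k ∘ γ))
    (chor cthor cuhor : ℝ → ℝ → E) (γ γt b : ℝ → ℝ → ℝ) (c ct : ℝ → ℝ → E)
    (hγ : ∀ t, IsReparam (γ t))
    (hc : ∀ t u, c t u = chor t (γ t u))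
    (hct : ∀ t u, ct t u = cthor t (γ t u) + γt t u • cuhor t (γ t u))
    (hb : ∀ t u, b t (γ t u) = γt t u)
    (hhor : ∀ t (a : ℝ → ℝ), G (chor t) (cthor t) (fun u => a u • cuhor t u) = 0)
    (hint1 : IntervalIntegrable
      (fun t => Real.sqrt (G (chor t) (cthor t) (cthor t))) MeasureTheory.volume 0 1)
    (hint2 : IntervalIntegrable
      (fun t => Real.sqrt (G (c t) (ct t) (ct t))) MeasureTheory.volume 0 1) :
    ∫ t in (0:ℝ)..1, Real.sqrt (G (chor t) (cthor t) (cthor t))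
      ≤ ∫ t in (0:ℝ)..1, Real.sqrt (G (c t) (ct t) (ct t)) := by
  refine intervalIntegral.integral_mono_on zero_le_one hint1 hint2 fun t _ => ?_
  have hc_comp : c t = chor t ∘ γ t := funext (hc t)
  have hct_comp := comp_add_smul_comp_eq (cthor t) (cuhor t) (γ t) (γt t) (b t) (ct t)
    (hct t) (hb t)
  have henergy : G (c t) (ct t) (ct t) =
      G (chor t) (cthor t + fun u => b t u • cuhor t u) (cthor t + fun u => b t u • cuhor t u) := by
    rw [hc_comp, hct_comp, ← hinv _ _ _ _ (hγ t)]
  rw [henergy]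
  exact Real.sqrt_le_sqrt <| apply_self_le_apply_add_self_of_apply_eq_zero (G (chor t))
    (hsymm _) (hadd _) (hpos _) (hhor t (b t))

/-- If a (weak) Riemannian metric `G` on the space of curves is reparametrization
invariant, `G_c(h,k) = G_{c∘γ}(h∘γ, k∘γ)`, then for any path of curves decomposed as
`c(t,u) = c^hor(t, γ(t,u))` with `c^hor` horizontal (its time-velocity `G`-orthogonal to
the vertical space `{a • ∂_u c^hor}`), the length satisfies `L_G(c^hor) ≤ L_G(c)`.
Here `ct` is the time-derivative of `c`, decomposed via the chain rule as
`∂_t c = ∂_t c^hor ∘ γ + ∂_t γ • (∂_u c^hor ∘ γ)`, and `b` is `∂_t γ` transported through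
`γ`. -/
theorem horizontal_part_shorter {E : Type*} [NormedAddCommGroup E] [NormedSpace ℝ E]
    (G : (ℝ → E) → (ℝ → E) → (ℝ → E) → ℝ)
    (hsymm : ∀ c h k, G c h k = G c k h)
    (hadd : ∀ c h₁ h₂ k, G c (h₁ + h₂) k = G c h₁ k + G c h₂ k)
    (hsmul : ∀ c (r : ℝ) h k, G c (r • h) k = r * G c h k)
    (hpos : ∀ c h, 0 ≤ G c h h)
    (hinv : ∀ c h k γ, IsReparam γ → G c h k = G (c ∘ γ) (h ∘ γ) (k ∘ γ))
    (chor cthor cuhor : ℝ → ℝ → E) (γ γt b : ℝ → ℝ → ℝ) (c ct : ℝ → ℝ → E)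
    (hγ : ∀ t, IsReparam (γ t))
    (hc : ∀ t u, c t u = chor t (γ t u))
    (hct : ∀ t u, ct t u = cthor t (γ t u) + γt t u • cuhor t (γ t u))
    (hb : ∀ t u, b t (γ t u) = γt t u)
    (hhor : ∀ t (a : ℝ → ℝ), G (chor t) (cthor t) (fun u => a u • cuhor t u) = 0)
    (hint1 : IntervalIntegrable
      (fun t => Real.sqrt (G (chor t) (cthor t) (cthor t))) MeasureTheory.volume 0 1)
    (hint2 : IntervalIntegrable
      (fun t => Real.sqrt (G (c t) (ct t) (ct t))) MeasureTheory.volume 0 1) :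
    ∫ t in (0:ℝ)..1, Real.sqrt (G (chor t) (cthor t) (cthor t))
      ≤ ∫ t in (0:ℝ)..1, Real.sqrt (G (c t) (ct t) (ct t)) :=
  horizontal_part_shorter_general G hsymm hadd hpos hinv chor cthor cuhor γ γt b c ct hγ hc hct hb
    hhor hint1 hint2
end

section
/- Let c : [0,1] → ℝᵈ be absolutely continuous with c'(u) ≠ 0 almost everywhere, and let γ ∈ Diff̄₊([0,1]) (absolutely continuous, nondecreasing, γ(0)=0, γ(1)=1). Then c ∘ γ is absolutely continuous and the L² distance between SRV transforms satisfies ‖Q(c ∘ γ)‖_{L²} = ‖Q(c)‖_{L²}, i.e., composition with a generalized reparametrization preserves the length of the curve. -/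
/-!
The primitive `F x = ∫ t in a..x, k t` of a density `k ≥ 0` pushes the measure `k x dx` on
`[a, b]` forward to Lebesgue measure on `[0, F b]`. On a half-line `Iic t` both measures give
`min t (F b)`: the preimage is an interval `[a, s]`, whose `k`-mass is `F s`, and the
intermediate value theorem gives `F s = min t (F b)`. Hence `∫ k • f ∘ F = ∫ f` for every `f`:
with `f = g` this shows that `c ∘ γ` has derivative `k • g ∘ γ`, and with `f = ‖g‖` that the
length `∫ ‖c'‖ = ‖Q c‖²` is unchanged.
-/

open MeasureTheory Set

theorem norm_srv_sq {E : Type*} [NormedAddCommGroup E] [NormedSpace ℝ E]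
    (g : ℝ → E) (u : ℝ) : ‖srv g u‖ ^ 2 = ‖g u‖ := by
  rcases eq_or_ne (g u) 0 with hgu | hgu
  · simp [srv, hgu]
  · have hn : 0 < ‖g u‖ := norm_pos_iff.2 hgu
    rw [srv, norm_smul, norm_inv, Real.norm_of_nonneg (Real.sqrt_nonneg _), mul_pow, inv_pow,
      Real.sq_sqrt hn.le]
    field_simp

theorem exists_preimage_Iic_inter_Icc_eq_Icc {α β : Type*} [ConditionallyCompleteLinearOrder α]
    [TopologicalSpace α] [OrderTopology α] [DenselyOrdered α] [LinearOrder β]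
    [TopologicalSpace β] [OrderClosedTopology β] {f : α → β} (hfc : Continuous f)
    (hfm : Monotone f) {a b : α} {t : β} (hab : a ≤ b) (hat : f a ≤ t) :
    ∃ s ∈ Icc a b, f ⁻¹' Iic t ∩ Icc a b = Icc a s ∧ f s = min t (f b) := by
  have ha : a ∈ f ⁻¹' Iic t ∩ Icc a b := ⟨hat, left_mem_Icc.2 hab⟩
  obtain ⟨s, ⟨hst, hs⟩, hs_max⟩ :=
    (isCompact_Icc.of_isClosed_subset ((isClosed_Iic.preimage hfc).inter isClosed_Icc)
      inter_subset_right).exists_isGreatest ⟨a, ha⟩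
  have hset : f ⁻¹' Iic t ∩ Icc a b = Icc a s :=
    Subset.antisymm (fun y hy => ⟨hy.2.1, hs_max hy⟩)
      fun y hy => ⟨(hfm hy.2).trans hst, hy.1, hy.2.trans hs.2⟩
  refine ⟨s, hs, hset, ?_⟩
  rcases le_or_gt (f b) t with hbt | htb
  · have : s = b := le_antisymm hs.2 (hs_max ⟨hbt, right_mem_Icc.2 hab⟩)
    rw [this, min_eq_right hbt]
  · -- a point of `[s, b]` where `f` takes the value `t` lies in the preimage, so it is `s`
    obtain ⟨y, hy, hyt⟩ := intermediate_value_Icc hs.2 hfc.continuousOn ⟨hst, htb.le⟩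
    have : y = s := le_antisymm (hs_max ⟨hyt.le, hs.1.trans hy.1, hy.2⟩) hy.1
    rw [← this, hyt, min_eq_left htb.le]

namespace MeasureTheory.LocallyIntegrable

variable {E : Type*} [NormedAddCommGroup E] {f : ℝ → E}

theorem intervalIntegrable (hf : LocallyIntegrable f) (a b : ℝ) :
    IntervalIntegrable f volume a b :=
  (hf.integrableOn_isCompact isCompact_uIcc).intervalIntegrable

theorem continuous_primitive [NormedSpace ℝ E] (hf : LocallyIntegrable f) (a : ℝ) :
    Continuous fun x => ∫ t in a..x, f t :=
  intervalIntegral.continuous_primitive hf.intervalIntegrable a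

end MeasureTheory.LocallyIntegrable

section Primitive

variable {k : ℝ → ℝ} {E : Type*} [NormedAddCommGroup E] [NormedSpace ℝ E]

theorem monotone_primitive_of_ae_nonneg (hk : LocallyIntegrable k) (hk0 : 0 ≤ᵐ[volume] k)
    (a : ℝ) : Monotone fun x => ∫ t in a..x, k t := fun x y hxy => by
  have hdiff := intervalIntegral.integral_interval_sub_left
    (hk.intervalIntegrable a y) (hk.intervalIntegrable a x)
  have hnonneg := intervalIntegral.integral_nonneg_of_ae hxy hk0
  dsimp only
  linarith

theorem map_primitive_withDensity (hk : LocallyIntegrable k) (hk0 : 0 ≤ᵐ[volume] k)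
    {a b : ℝ} (hab : a ≤ b) :
    ((volume.restrict (Icc a b)).withDensity fun y => ENNReal.ofReal (k y)).map
      (fun x => ∫ t in a..x, k t) = volume.restrict (Icc 0 (∫ t in a..b, k t)) := by
  set F : ℝ → ℝ := fun x => ∫ t in a..x, k t with hF
  have hFc : Continuous F := hk.continuous_primitive a
  have hFm : Monotone F := monotone_primitive_of_ae_nonneg hk hk0 a
  have hFa : F a = 0 := intervalIntegral.integral_same
  have : IsFiniteMeasure ((volume.restrict (Icc a b)).withDensity fun y => ENNReal.ofReal (k y)) :=
    isFiniteMeasure_withDensity_ofReal (hk.integrableOn_isCompact isCompact_Icc).2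
  refine Measure.ext_of_Iic _ _ fun t => ?_
  have hpre : MeasurableSet (F ⁻¹' Iic t) := hFc.measurable measurableSet_Iic
  rw [Measure.map_apply hFc.measurable measurableSet_Iic, withDensity_apply _ hpre,
    Measure.restrict_restrict hpre, Measure.restrict_apply measurableSet_Iic]
  rcases lt_or_ge t 0 with ht | ht
  · have hempty : F ⁻¹' Iic t ∩ Icc a b = ∅ :=
      eq_empty_of_forall_notMem fun y hy => ht.not_ge (hFa ▸ (hFm hy.2.1).trans hy.1)
    have hempty' : Iic t ∩ Icc 0 (F b) = ∅ :=
      eq_empty_of_forall_notMem fun y hy => ht.not_ge (hy.2.1.trans hy.1)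
    rw [hempty, hempty', Measure.restrict_empty, lintegral_zero_measure, measure_empty]
  · obtain ⟨s, hs, hset, hFs⟩ := exists_preimage_Iic_inter_Icc_eq_Icc hFc hFm hab (hFa ▸ ht)
    have hset' : Iic t ∩ Icc 0 (F b) = Icc 0 (min t (F b)) := by
      rw [inter_comm, ← Ici_inter_Iic, inter_assoc, Iic_inter_Iic, min_comm, Ici_inter_Iic]
    rw [hset, hset', Real.volume_Icc, sub_zero, ← hFs]
    simp only [hF]
    rw [intervalIntegral.integral_of_le hs.1, ← integral_Icc_eq_integral_Ioc,
      ofReal_integral_eq_lintegral_ofReal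
        (hk.integrableOn_isCompact isCompact_Icc) (ae_restrict_of_ae hk0)]

theorem integral_smul_comp_primitive (hk : LocallyIntegrable k) (hk0 : 0 ≤ᵐ[volume] k)
    {a b : ℝ} (hab : a ≤ b) {f : ℝ → E}
    (hf : AEStronglyMeasurable f (volume.restrict (Icc 0 (∫ t in a..b, k t)))) :
    ∫ x in a..b, k x • f (∫ t in a..x, k t) = ∫ y in 0..(∫ t in a..b, k t), f y := by
  have hFb : 0 ≤ ∫ t in a..b, k t := intervalIntegral.integral_nonneg_of_ae hab hk0
  have hmap := map_primitive_withDensity hk hk0 hab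
  rw [← hmap] at hf
  rw [intervalIntegral.integral_of_le hab, ← integral_Icc_eq_integral_Ioc,
    intervalIntegral.integral_of_le hFb, ← integral_Icc_eq_integral_Ioc, ← hmap,
    integral_map (hk.continuous_primitive a).aemeasurable hf]
  refine ((integral_withDensity_eq_integral_smul₀
    hk.aestronglyMeasurable.aemeasurable.real_toNNReal.restrict _).trans
      (integral_congr_ae (ae_restrict_of_ae ?_))).symm
  filter_upwards [hk0] with x hx
  rw [NNReal.smul_def, Real.coe_toNNReal _ hx]

theorem integral_norm_smul_comp_primitive (hk : LocallyIntegrable k) (hk0 : 0 ≤ᵐ[volume] k)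
    {a b : ℝ} (hab : a ≤ b) {f : ℝ → E}
    (hf : AEStronglyMeasurable f (volume.restrict (Icc 0 (∫ t in a..b, k t)))) :
    ∫ x in a..b, ‖k x • f (∫ t in a..x, k t)‖ = ∫ y in 0..(∫ t in a..b, k t), ‖f y‖ := by
  calc ∫ x in a..b, ‖k x • f (∫ t in a..x, k t)‖
      = ∫ x in a..b, k x • ‖f (∫ t in a..x, k t)‖ := by
        refine intervalIntegral.integral_congr_ae ?_
        filter_upwards [hk0] with x hx _
        rw [norm_smul, Real.norm_of_nonneg hx, smul_eq_mul]
    _ = ∫ y in 0..(∫ t in a..b, k t), ‖f y‖ :=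
        integral_smul_comp_primitive (f := fun y => ‖f y‖) hk hk0 hab hf.norm

theorem integrableOn_smul_comp_primitive (hk : LocallyIntegrable k) (hk0 : 0 ≤ᵐ[volume] k)
    {a b : ℝ} (hab : a ≤ b) {f : ℝ → E} (hf : IntegrableOn f (Icc 0 (∫ t in a..b, k t))) :
    IntegrableOn (fun x => k x • f (∫ t in a..x, k t)) (Icc a b) := by
  rw [IntegrableOn, ← map_primitive_withDensity hk hk0 hab, integrable_map_measure
    hf.aestronglyMeasurable (hk.continuous_primitive a).aemeasurable] at hf
  refine ((integrable_withDensity_iff_integrable_smul₀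
    hk.aestronglyMeasurable.aemeasurable.real_toNNReal.restrict).1 hf).congr
      (ae_restrict_of_ae ?_)
  filter_upwards [hk0] with x hx
  rw [NNReal.smul_def, Real.coe_toNNReal _ hx]
  rfl

end Primitive

theorem srv_norm_invariant_gen_reparam_general (d : ℕ)
    (c g : ℝ → EuclideanSpace ℝ (Fin d)) (γ k : ℝ → ℝ)
    (hg : IntegrableOn g (Icc 0 1))
    (hc : ∀ u ∈ Icc (0:ℝ) 1, c u = c 0 + ∫ y in (0:ℝ)..u, g y)
    (hk : IntegrableOn k (Icc 0 1))
    (hknn : ∀ᵐ u ∂(volume.restrict (Icc (0:ℝ) 1)), 0 ≤ k u)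
    (hγ0 : γ 0 = 0) (hγ1 : γ 1 = 1)
    (hγ : ∀ u ∈ Icc (0:ℝ) 1, γ u = ∫ y in (0:ℝ)..u, k y) :
    ∃ h : ℝ → EuclideanSpace ℝ (Fin d),
      IntegrableOn h (Icc 0 1) ∧
      (∀ u ∈ Icc (0:ℝ) 1, c (γ u) = c (γ 0) + ∫ y in (0:ℝ)..u, h y) ∧
      (∀ᵐ u ∂(volume.restrict (Icc (0:ℝ) 1)), h u = k u • g (γ u)) ∧
      ∫ u in (0:ℝ)..1, ‖srv h u‖ ^ 2 = ∫ u in (0:ℝ)..1, ‖srv g u‖ ^ 2 := by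
  -- extended by zero, `k` has a monotone continuous primitive on all of `ℝ`
  set k₁ := (Icc (0:ℝ) 1).indicator k
  have hk₁ : LocallyIntegrable k₁ := (hk.integrable_indicator measurableSet_Icc).locallyIntegrable
  have hk₁0 : 0 ≤ᵐ[volume] k₁ := by
    filter_upwards [(ae_restrict_iff' measurableSet_Icc).1 hknn] with x hx
    exact indicator_apply_nonneg hx
  have hγk₁ : ∀ u ∈ Icc (0:ℝ) 1, γ u = ∫ t in (0:ℝ)..u, k₁ t := fun u hu => by
    rw [hγ u hu]
    exact intervalIntegral.integral_congr fun x hx =>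
      (indicator_of_mem (uIcc_subset_Icc (left_mem_Icc.2 zero_le_one) hu hx) k).symm
  have hk₁1 : ∫ t in (0:ℝ)..1, k₁ t = 1 := by rw [← hγk₁ 1 (right_mem_Icc.2 zero_le_one), hγ1]
  have hγmem : ∀ u ∈ Icc (0:ℝ) 1, γ u ∈ Icc (0:ℝ) 1 := fun u hu => by
    rw [hγk₁ u hu]
    exact ⟨intervalIntegral.integral_nonneg_of_ae hu.1 hk₁0,
      hk₁1 ▸ monotone_primitive_of_ae_nonneg hk₁ hk₁0 0 hu.2⟩
  refine ⟨fun x => k₁ x • g (∫ t in (0:ℝ)..x, k₁ t), ?_, fun u hu => ?_, ?_, ?_⟩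
  · exact integrableOn_smul_comp_primitive hk₁ hk₁0 zero_le_one (by rwa [hk₁1])
  · rw [hγ0, hc _ (hγmem u hu), integral_smul_comp_primitive hk₁ hk₁0 hu.1, ← hγk₁ u hu]
    exact (hg.mono_set (Icc_subset_Icc_right (hγk₁ u hu ▸ hγmem u hu).2)).aestronglyMeasurable
  · filter_upwards [ae_restrict_mem measurableSet_Icc] with u hu
    simp only [k₁, indicator_of_mem hu, ← hγk₁ u hu]
  · simp only [norm_srv_sq]
    rw [integral_norm_smul_comp_primitive hk₁ hk₁0 zero_le_one
      (by rw [hk₁1]; exact hg.aestronglyMeasurable), hk₁1]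

/-- Let `c : [0,1] → ℝᵈ` be absolutely continuous (with derivative `g`) with `c' ≠ 0`
a.e., and let `γ ∈ Diff̄₊([0,1])` be a generalized reparametrization (absolutely
continuous with density `k ≥ 0` a.e., `γ 0 = 0`, `γ 1 = 1`). Then `c ∘ γ` is absolutely
continuous with derivative `k • (g ∘ γ)` a.e., and the L² norm of the SRV transform is
preserved: `‖Q(c ∘ γ)‖_{L²} = ‖Q(c)‖_{L²}` (the length of the curve is unchanged). -/
theorem srv_norm_invariant_gen_reparam (d : ℕ)
    (c g : ℝ → EuclideanSpace ℝ (Fin d)) (γ k : ℝ → ℝ)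
    (hg : IntegrableOn g (Icc 0 1))
    (hc : ∀ u ∈ Icc (0:ℝ) 1, c u = c 0 + ∫ y in (0:ℝ)..u, g y)
    (hgne : ∀ᵐ u ∂(volume.restrict (Icc (0:ℝ) 1)), g u ≠ 0)
    (hk : IntegrableOn k (Icc 0 1))
    (hknn : ∀ᵐ u ∂(volume.restrict (Icc (0:ℝ) 1)), 0 ≤ k u)
    (hγ0 : γ 0 = 0) (hγ1 : γ 1 = 1)
    (hγ : ∀ u ∈ Icc (0:ℝ) 1, γ u = ∫ y in (0:ℝ)..u, k y) :
    ∃ h : ℝ → EuclideanSpace ℝ (Fin d),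
      IntegrableOn h (Icc 0 1) ∧
      (∀ u ∈ Icc (0:ℝ) 1, c (γ u) = c (γ 0) + ∫ y in (0:ℝ)..u, h y) ∧
      (∀ᵐ u ∂(volume.restrict (Icc (0:ℝ) 1)), h u = k u • g (γ u)) ∧
      ∫ u in (0:ℝ)..1, ‖srv h u‖ ^ 2 = ∫ u in (0:ℝ)..1, ‖srv g u‖ ^ 2 :=
  srv_norm_invariant_gen_reparam_general d c g γ k hg hc hk hknn hγ0 hγ1 hγ
end

section
/- The group Diff₊([0,1]) of orientation-preserving smooth diffeomorphisms fixing the endpoints is dense in the monoid Diff̄₊([0,1]) of absolutely continuous nondecreasing surjections of [0,1] fixing the endpoints, with respect to the topology induced by the map γ ↦ √(γ') ∈ L²([0,1], ℝ). -/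
open MeasureTheory Set
open scoped ENNReal ContDiff

/-!
Since `∫₀¹ k = 1`, `√k` is a unit vector of `L²[0,1]`. Approximate it in `L²` by a smooth `g`;
then `f = g² + δ` is smooth and positive, and `√f` stays close to `√k` because `√k ≥ 0`.
The diffeomorphism `ψ(u) = ∫₀ᵘ f / ∫₀¹ f` has `√ψ' = √f / ‖√f‖`, and projecting `√f` radially
onto the unit sphere at most doubles its distance to the unit vector `√k`.
-/

theorem norm_sub_inv_norm_smul_le {E : Type*} [NormedAddCommGroup E] [NormedSpace ℝ E]
    {u v : E} (hu : ‖u‖ = 1) : ‖u - ‖v‖⁻¹ • v‖ ≤ 2 * ‖u - v‖ := by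
  rcases eq_or_ne v 0 with rfl | hv
  · simp [hu]
  have hv_pos : 0 < ‖v‖ := norm_pos_iff.2 hv
  have h_rescale : ‖v - ‖v‖⁻¹ • v‖ = |‖v‖ - ‖u‖| := by
    rw [show v - ‖v‖⁻¹ • v = (1 - ‖v‖⁻¹) • v by rw [sub_smul, one_smul], norm_smul,
      Real.norm_eq_abs, hu, ← abs_of_pos hv_pos, ← abs_mul, abs_of_pos hv_pos]
    congr 1
    field_simp
  calc ‖u - ‖v‖⁻¹ • v‖ ≤ ‖u - v‖ + ‖v - ‖v‖⁻¹ • v‖ := norm_sub_le_norm_sub_add_norm_sub _ _ _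
    _ ≤ ‖u - v‖ + ‖u - v‖ := by
        rw [h_rescale]
        gcongr
        exact (abs_norm_sub_norm_le v u).trans_eq (norm_sub_rev v u)
    _ = 2 * ‖u - v‖ := by ring

theorem abs_sub_sqrt_sq_add_le {a b δ : ℝ} (hb : 0 ≤ b) (hδ : 0 ≤ δ) :
    |b - √(a ^ 2 + δ)| ≤ |b - a| + √δ := by
  have h_lower : |a| ≤ √(a ^ 2 + δ) := by
    rw [← Real.sqrt_sq_eq_abs]
    exact Real.sqrt_le_sqrt (by linarith)
  have h_upper : √(a ^ 2 + δ) ≤ |a| + √δ := by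
    rw [Real.sqrt_le_iff]
    refine ⟨by positivity, ?_⟩
    nlinarith [sq_abs a, Real.sq_sqrt hδ, abs_nonneg a, Real.sqrt_nonneg δ]
  have h_abs : |b - (|a|)| ≤ |b - a| := by
    simpa [abs_of_nonneg hb] using abs_abs_sub_abs_le_abs_sub b a
  calc |b - √(a ^ 2 + δ)| ≤ |b - (|a|)| + |(|a|) - √(a ^ 2 + δ)| := abs_sub_le _ _ _
    _ ≤ |b - a| + √δ := add_le_add h_abs (abs_sub_le_iff.2 ⟨by linarith, by linarith⟩)

theorem exists_contDiff_pos_eLpNorm_sub_sqrt_le {E : Type*} [NormedAddCommGroup E]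
    [NormedSpace ℝ E] [FiniteDimensional ℝ E] [MeasurableSpace E] [BorelSpace E]
    {μ : Measure E} [IsFiniteMeasure μ] {F : E → ℝ} (hF : MemLp F 2 μ) (hF_nonneg : 0 ≤ᵐ[μ] F)
    {ε : ℝ} (hε : 0 < ε) :
    ∃ f : E → ℝ, ContDiff ℝ ∞ f ∧ (∀ x, 0 < f x) ∧
      eLpNorm (fun x => F x - √(f x)) 2 μ ≤ ENNReal.ofReal ε := by
  obtain ⟨g, -, hg, hFg⟩ := hF.exist_eLpNorm_sub_le ENNReal.ofNat_ne_top one_le_two (half_pos hε)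
  set M := (μ univ ^ (2 : ℝ≥0∞).toReal⁻¹).toReal
  -- `M + 1` rather than `M`, so that `c > 0` also when `μ = 0`
  set c := ε / 2 / (M + 1)
  have hc : 0 < c := by positivity
  refine ⟨fun x => g x ^ 2 + c ^ 2, (hg.pow 2).add contDiff_const, fun x => by positivity, ?_⟩
  have h_const : eLpNorm (fun _ => c) 2 μ ≤ ENNReal.ofReal (ε / 2) := by
    calc eLpNorm (fun _ => c) 2 μ ≤ μ univ ^ (2 : ℝ≥0∞).toReal⁻¹ * ENNReal.ofReal c :=
          eLpNorm_le_of_ae_bound (ae_of_all _ fun _ => (Real.norm_of_nonneg hc.le).le)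
      _ = ENNReal.ofReal (M * c) := by
          rw [ENNReal.ofReal_mul (by positivity), ENNReal.ofReal_toReal]
          exact ENNReal.rpow_ne_top_of_nonneg (by positivity) (measure_ne_top μ univ)
      _ ≤ ENNReal.ofReal (ε / 2) := by
          refine ENNReal.ofReal_le_ofReal ?_
          rw [mul_div_left_comm]
          exact mul_le_of_le_one_right (by positivity)
            ((div_le_one (by positivity)).2 (by linarith))
  calc eLpNorm (fun x => F x - √(g x ^ 2 + c ^ 2)) 2 μ
      ≤ eLpNorm (fun x => ‖(F - g) x‖ + c) 2 μ := by
        refine eLpNorm_mono_ae_real (hF_nonneg.mono fun x hx => ?_)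
        simpa [Real.sqrt_sq hc.le] using abs_sub_sqrt_sq_add_le (a := g x) hx (sq_nonneg c)
    _ ≤ eLpNorm (F - g) 2 μ + eLpNorm (fun _ => c) 2 μ := by
        refine (eLpNorm_add_le ?_ aestronglyMeasurable_const one_le_two).trans_eq ?_
        · exact (hF.1.sub hg.continuous.aestronglyMeasurable).norm
        · rw [eLpNorm_norm]
    _ ≤ ENNReal.ofReal (ε / 2) + ENNReal.ofReal (ε / 2) := add_le_add hFg h_const
    _ = ENNReal.ofReal ε := by
        rw [← ENNReal.ofReal_add (by positivity) (by positivity), add_halves]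

section L2

variable {α : Type*} [MeasurableSpace α] {μ : Measure α}

theorem MeasureTheory.MemLp.norm_toLp_eq_rpow_integral_sq {F : α → ℝ} (hF : MemLp F 2 μ) :
    ‖hF.toLp F‖ = (∫ x, F x ^ 2 ∂μ) ^ (1 / 2 : ℝ) := by
  rw [Lp.norm_toLp, hF.eLpNorm_eq_integral_rpow_norm two_ne_zero ENNReal.ofNat_ne_top,
    ENNReal.toReal_ofReal (by positivity)]
  norm_num [Real.norm_eq_abs, sq_abs]

theorem memLp_two_sqrt {h : α → ℝ} (hi : Integrable h μ) (h_nonneg : 0 ≤ᵐ[μ] h) :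
    MemLp (fun x => √(h x)) 2 μ :=
  (memLp_two_iff_integrable_sq (Real.continuous_sqrt.comp_aestronglyMeasurable hi.1)).2
    (hi.congr (h_nonneg.mono fun _ hx => (Real.sq_sqrt hx).symm))

theorem norm_toLp_sqrt {h : α → ℝ} (hi : Integrable h μ) (h_nonneg : 0 ≤ᵐ[μ] h) :
    ‖(memLp_two_sqrt hi h_nonneg).toLp _‖ = √(∫ x, h x ∂μ) := by
  rw [MemLp.norm_toLp_eq_rpow_integral_sq, Real.sqrt_eq_rpow]
  exact congrArg (· ^ _) (integral_congr_ae (h_nonneg.mono fun _ hx => Real.sq_sqrt hx))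

theorem rpow_integral_sq_sub_sqrt_normalize_le {k f : α → ℝ} (hk : Integrable k μ)
    (hk_nonneg : 0 ≤ᵐ[μ] k) (hk_mass : ∫ x, k x ∂μ = 1) (hf : Integrable f μ)
    (hf_nonneg : 0 ≤ᵐ[μ] f) :
    (∫ x, (√(k x) - √((∫ y, f y ∂μ)⁻¹ * f x)) ^ 2 ∂μ) ^ (1 / 2 : ℝ) ≤
      2 * (eLpNorm (fun x => √(k x) - √(f x)) 2 μ).toReal := by
  have hk_mem := memLp_two_sqrt hk hk_nonneg
  have hf_mem := memLp_two_sqrt hf hf_nonneg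
  set u := hk_mem.toLp _
  set v := hf_mem.toLp _
  have hu : ‖u‖ = 1 := by rw [norm_toLp_sqrt hk hk_nonneg, hk_mass, Real.sqrt_one]
  have h_sqrt : ∀ x, √((∫ y, f y ∂μ)⁻¹ * f x) = ‖v‖⁻¹ * √(f x) := fun x => by
    rw [norm_toLp_sqrt hf hf_nonneg, Real.sqrt_mul (inv_nonneg.2 (integral_nonneg_of_ae hf_nonneg)),
      Real.sqrt_inv]
  simp_rw [h_sqrt]
  have h_mem : MemLp (fun x => √(k x) - ‖v‖⁻¹ * √(f x)) 2 μ :=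
    hk_mem.sub (hf_mem.const_mul ‖v‖⁻¹)
  have h_toLp : h_mem.toLp _ = u - ‖v‖⁻¹ • v := by
    rw [← MemLp.toLp_const_smul, ← MemLp.toLp_sub]
    rfl
  calc _ = ‖u - ‖v‖⁻¹ • v‖ := by rw [← h_toLp, h_mem.norm_toLp_eq_rpow_integral_sq]
    _ ≤ 2 * ‖u - v‖ := norm_sub_inv_norm_smul_le hu
    _ = 2 * (eLpNorm (fun x => √(k x) - √(f x)) 2 μ).toReal := by
        rw [← MemLp.toLp_sub, Lp.norm_toLp]
        rfl

end L2

noncomputable def normalizedPrimitive (a b : ℝ) (f : ℝ → ℝ) (u : ℝ) : ℝ :=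
  (∫ t in a..b, f t)⁻¹ * ∫ t in a..u, f t

section normalizedPrimitive

variable {a b : ℝ} {f : ℝ → ℝ}

theorem hasDerivAt_normalizedPrimitive (hf : Continuous f) (u : ℝ) :
    HasDerivAt (normalizedPrimitive a b f) ((∫ t in a..b, f t)⁻¹ * f u) u :=
  (hf.integral_hasStrictDerivAt a u).hasDerivAt.const_mul _

theorem deriv_normalizedPrimitive (hf : Continuous f) :
    deriv (normalizedPrimitive a b f) = fun u => (∫ t in a..b, f t)⁻¹ * f u :=
  funext fun u => (hasDerivAt_normalizedPrimitive hf u).deriv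

theorem contDiff_normalizedPrimitive (hf : ContDiff ℝ ∞ f) :
    ContDiff ℝ ∞ (normalizedPrimitive a b f) := by
  refine contDiff_infty_iff_deriv.2
    ⟨fun u => (hasDerivAt_normalizedPrimitive hf.continuous u).differentiableAt, ?_⟩
  rw [deriv_normalizedPrimitive hf.continuous]
  exact contDiff_const.mul hf

theorem normalizedPrimitive_left : normalizedPrimitive a b f a = 0 := by
  simp [normalizedPrimitive]

theorem normalizedPrimitive_right (hf : Continuous f) (hf_pos : ∀ x, 0 < f x) (hab : a < b) :
    normalizedPrimitive a b f b = 1 :=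
  inv_mul_cancel₀
    (intervalIntegral.intervalIntegral_pos_of_pos (hf.intervalIntegrable a b) hf_pos hab).ne'

theorem deriv_normalizedPrimitive_pos (hf : Continuous f) (hf_pos : ∀ x, 0 < f x) (hab : a < b)
    (u : ℝ) : 0 < deriv (normalizedPrimitive a b f) u := by
  rw [deriv_normalizedPrimitive hf]
  exact mul_pos (inv_pos.2 (intervalIntegral.intervalIntegral_pos_of_pos
    (hf.intervalIntegrable a b) hf_pos hab)) (hf_pos u)

theorem mapsTo_normalizedPrimitive (hf : Continuous f) (hf_pos : ∀ x, 0 < f x) (hab : a < b) :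
    MapsTo (normalizedPrimitive a b f) (Icc a b) (Icc 0 1) := by
  have h_mono := (strictMono_of_deriv_pos (deriv_normalizedPrimitive_pos hf hf_pos hab)).monotone
  exact fun u hu => ⟨normalizedPrimitive_left (f := f) (b := b) ▸ h_mono hu.1,
    normalizedPrimitive_right hf hf_pos hab ▸ h_mono hu.2⟩

end normalizedPrimitive

theorem diff_dense_in_gen_reparam_general (γ k : ℝ → ℝ)
    (hk : IntegrableOn k (Icc 0 1))
    (hknn : ∀ᵐ u ∂(volume.restrict (Icc (0:ℝ) 1)), 0 ≤ k u)
    (hγ1 : γ 1 = 1)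
    (hγ : ∀ u ∈ Icc (0:ℝ) 1, γ u = ∫ y in (0:ℝ)..u, k y) :
    ∀ ε > 0, ∃ ψ : ℝ → ℝ, ContDiff ℝ (⊤ : ℕ∞) ψ ∧ ψ 0 = 0 ∧ ψ 1 = 1 ∧
      (∀ u ∈ Icc (0:ℝ) 1, 0 < deriv ψ u) ∧ MapsTo ψ (Icc 0 1) (Icc 0 1) ∧
      (∫ u in (0:ℝ)..1, (Real.sqrt (k u) - Real.sqrt (deriv ψ u)) ^ 2) ^ (1/2 : ℝ) < ε := by
  intro ε hε
  have h_Icc : ∀ F : ℝ → ℝ, ∫ u in (0:ℝ)..1, F u = ∫ u in Icc (0:ℝ) 1, F u := fun F => by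
    rw [intervalIntegral.integral_of_le zero_le_one, integral_Icc_eq_integral_Ioc]
  have hk_mass : ∫ u in Icc (0:ℝ) 1, k u = 1 := by rw [← h_Icc, ← hγ 1 (by simp), hγ1]
  obtain ⟨f, hf_smooth, hf_pos, hf_near⟩ := exists_contDiff_pos_eLpNorm_sub_sqrt_le
    (memLp_two_sqrt hk hknn) (ae_of_all _ fun _ => Real.sqrt_nonneg _) (by positivity : 0 < ε / 3)
  have hf := hf_smooth.continuous
  refine ⟨normalizedPrimitive 0 1 f, contDiff_normalizedPrimitive hf_smooth,
    normalizedPrimitive_left, normalizedPrimitive_right hf hf_pos one_pos,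
    fun u _ => deriv_normalizedPrimitive_pos hf hf_pos one_pos u,
    mapsTo_normalizedPrimitive hf hf_pos one_pos, ?_⟩
  rw [deriv_normalizedPrimitive hf, h_Icc, h_Icc]
  calc _ ≤ 2 * (eLpNorm (fun x => √(k x) - √(f x)) 2 (volume.restrict (Icc 0 1))).toReal :=
        rpow_integral_sq_sub_sqrt_normalize_le hk hknn hk_mass hf.integrableOn_Icc
          (ae_of_all _ fun x => (hf_pos x).le)
    _ ≤ 2 * (ε / 3) := by gcongr; exact ENNReal.toReal_le_of_le_ofReal (by positivity) hf_near
    _ < ε := by linarith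

/-- `Diff₊([0,1])` is dense in the monoid `Diff̄₊([0,1])` of absolutely continuous
nondecreasing surjections of `[0,1]` fixing the endpoints, for the metric
`d(γ₁, γ₂) = ‖√(γ₁') − √(γ₂')‖_{L²}`: every generalized reparametrization `γ`
(with density `k ≥ 0` a.e.) is approximated arbitrarily well by smooth diffeomorphisms
`ψ` with strictly positive derivative, in the sense that
`‖√k − √(ψ')‖_{L²([0,1])} < ε`. -/
theorem diff_dense_in_gen_reparam (γ k : ℝ → ℝ)
    (hk : IntegrableOn k (Icc 0 1))
    (hknn : ∀ᵐ u ∂(volume.restrict (Icc (0:ℝ) 1)), 0 ≤ k u)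
    (hγ0 : γ 0 = 0) (hγ1 : γ 1 = 1)
    (hγ : ∀ u ∈ Icc (0:ℝ) 1, γ u = ∫ y in (0:ℝ)..u, k y) :
    ∀ ε > 0, ∃ ψ : ℝ → ℝ, ContDiff ℝ (⊤ : ℕ∞) ψ ∧ ψ 0 = 0 ∧ ψ 1 = 1 ∧
      (∀ u ∈ Icc (0:ℝ) 1, 0 < deriv ψ u) ∧ MapsTo ψ (Icc 0 1) (Icc 0 1) ∧
      (∫ u in (0:ℝ)..1, (Real.sqrt (k u) - Real.sqrt (deriv ψ u)) ^ 2) ^ (1/2 : ℝ) < ε :=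
  diff_dense_in_gen_reparam_general γ k hk hknn hγ1 hγ
end
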